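/- arXiv:0706.0593 — 3 statements merged into one kernel-verified Lean document; each statement's English description precedes it below -/
import Mathlib

section
/- Let K be a field, let u, v ∈ K, let g ≥ 1 be an integer, and let a, b, c ∈ K be nonzero and pairwise distinct. Then the coefficient of x^{2g−2} in the formal power series (1+ux)^g (1+vx)^g (1−ax)^{−1} (1−bx)^{−1} (1−cx)^{−1} ∈ K[[x]] equals (a+u)^g (a+v)^g /((a−b)(a−c)) + (b+u)^g (b+v)^g /((b−a)(b−c)) + (c+u)^g (c+v)^g /((c−a)(c−b)). -/
/-!
Partial fractions give `X² / ((1 - aX)(1 - bX)(1 - cX)) = ∑ 1 / ((a - b)(a - c)) · 1 / (1 - aX)`,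
summed over the three ways of singling out one of `a, b, c`. So the coefficient of `X^(2g-2)` is
the corresponding combination of the coefficients of `X^(2g)` in `P / (1 - aX)`, where
`P = (1 + uX)^g (1 + vX)^g`. Since `P` has degree at most `2g`, that coefficient is
`∑ pᵢ a^(2g-i)`, the value at `a` of the reversed polynomial `X^(2g) P(1/X) = (X + u)^g (X + v)^g`.
-/

namespace Polynomial

variable {R : Type*} [Semiring R]

theorem reflect_pow {f : R[X]} {d : ℕ} (hf : f.natDegree ≤ d) :
    ∀ g : ℕ, (f ^ g).reflect (d * g) = f.reflect d ^ g
  | 0 => by simp [reflect_one]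
  | g + 1 => by
    rw [pow_succ, Nat.mul_succ, reflect_mul _ _ (natDegree_pow_le_of_le g hf |>.trans_eq
      (mul_comm g d)) hf, reflect_pow hf g, pow_succ]

theorem reflect_one_add_C_mul_X (u : R) : (1 + C u * X).reflect 1 = X + C u := by
  simp [reflect_add, reflect_one]

theorem sum_coeff_mul_pow_sub_eq_eval_reflect {p : R[X]} {n : ℕ} (hp : p.natDegree ≤ n)
    (a : R) :
    ∑ i ∈ Finset.range (n + 1), p.coeff i * a ^ (n - i) = (p.reflect n).eval a := by
  have hdeg : (p.reflect n).natDegree < n + 1 :=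
    natDegree_reflect_le.trans_lt (max_lt n.lt_succ_self (Nat.lt_succ_of_le hp))
  rw [eval_eq_sum_range' hdeg, ← Finset.sum_range_reflect]
  refine Finset.sum_congr rfl fun i hi => ?_
  have hi : i ≤ n := Nat.lt_succ_iff.1 (Finset.mem_range.1 hi)
  rw [coeff_reflect, revAt_le (by omega), Nat.add_sub_cancel, Nat.sub_sub_self hi]

end Polynomial

namespace PowerSeries

variable {K : Type*} [Field K]

theorem inv_one_sub_C_mul_X (a : K) : (1 - C a * X)⁻¹ = mk (a ^ ·) := by
  rw [PowerSeries.inv_eq_iff_mul_eq_one (by simp)]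
  simpa [rescale_mk] using congrArg (rescale a) (mk_one_mul_one_sub_eq_one (S := K))

theorem coeff_mul_inv_one_sub_C_mul_X (f : K⟦X⟧) (a : K) (n : ℕ) :
    coeff n (f * (1 - C a * X)⁻¹) = ∑ i ∈ Finset.range (n + 1), coeff i f * a ^ (n - i) := by
  simp [inv_one_sub_C_mul_X, coeff_mul, Finset.Nat.sum_antidiagonal_eq_sum_range_succ_mk]

theorem C_sub_mul_X_mul_inv_one_sub_mul_inv_one_sub (a b : K) :
    C (a - b) * X * ((1 - C a * X)⁻¹ * (1 - C b * X)⁻¹) =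
      (1 - C a * X)⁻¹ - (1 - C b * X)⁻¹ := by
  have ha : (1 - C a * X)⁻¹ * (1 - C a * X) = 1 := PowerSeries.inv_mul_cancel _ (by simp)
  have hb : (1 - C b * X)⁻¹ * (1 - C b * X) = 1 := PowerSeries.inv_mul_cancel _ (by simp)
  rw [map_sub]
  linear_combination (1 - C a * X)⁻¹ * hb - (1 - C b * X)⁻¹ * ha

theorem X_sq_mul_inv_one_sub_C_mul_X_mul_mul {a b c : K} (hab : a ≠ b) (hac : a ≠ c)
    (hbc : b ≠ c) :
    X ^ 2 * ((1 - C a * X)⁻¹ * (1 - C b * X)⁻¹ * (1 - C c * X)⁻¹) =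
      C ((a - b) * (a - c))⁻¹ * (1 - C a * X)⁻¹ +
        C ((b - a) * (b - c))⁻¹ * (1 - C b * X)⁻¹ +
        C ((c - a) * (c - b))⁻¹ * (1 - C c * X)⁻¹ := by
  have h_ab := C_sub_mul_X_mul_inv_one_sub_mul_inv_one_sub a b
  have h_ac := C_sub_mul_X_mul_inv_one_sub_mul_inv_one_sub a c
  have h_bc := C_sub_mul_X_mul_inv_one_sub_mul_inv_one_sub b c
  set Ia := (1 - C a * X)⁻¹
  set Ib := (1 - C b * X)⁻¹
  set Ic := (1 - C c * X)⁻¹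
  have cleared : C ((a - b) * (a - c) * (b - c)) * X ^ 2 * (Ia * Ib * Ic) =
      C (b - c) * Ia - C (a - c) * Ib + C (a - b) * Ic := by
    simp only [map_mul, map_sub] at *
    linear_combination (C a - C c) * (C b - C c) * X * Ic * h_ab + (C b - C c) * h_ac -
      (C a - C c) * h_bc
  have hd : (a - b) * (a - c) * (b - c) ≠ 0 := by simp [sub_ne_zero, hab, hac, hbc]
  set e := ((a - b) * (a - c) * (b - c))⁻¹ with he
  have k : C e * C ((a - b) * (a - c) * (b - c)) = 1 := by
    rw [← map_mul, inv_mul_cancel₀ hd, map_one]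
  have ka : C ((a - b) * (a - c))⁻¹ = C e * C (b - c) := by
    rw [← map_mul]; refine congrArg C ?_; rw [he]; field_simp
  have kb : C ((b - a) * (b - c))⁻¹ = -(C e * C (a - c)) := by
    rw [← map_mul, ← map_neg]; refine congrArg C ?_; rw [he]; field_simp; ring
  have kc : C ((c - a) * (c - b))⁻¹ = C e * C (a - b) := by
    rw [← map_mul]; refine congrArg C ?_; rw [he]; field_simp; ring
  rw [ka, kb, kc]
  linear_combination C e * cleared - X ^ 2 * (Ia * Ib * Ic) * k

theorem coeff_two_mul_mul_inv_one_sub_C_mul_X (u v a : K) (g : ℕ) :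
    coeff (2 * g) ((1 + C u * X) ^ g * (1 + C v * X) ^ g * (1 - C a * X)⁻¹) =
      (a + u) ^ g * (a + v) ^ g := by
  let q : Polynomial K := (1 + Polynomial.C u * Polynomial.X) * (1 + Polynomial.C v * Polynomial.X)
  have hq : q.natDegree ≤ 2 := by simp only [q]; compute_degree
  have hcoe : ((q ^ g : Polynomial K) : K⟦X⟧) = (1 + C u * X) ^ g * (1 + C v * X) ^ g := by
    simp [q, mul_pow]
  rw [coeff_mul_inv_one_sub_C_mul_X, ← hcoe]
  simp only [Polynomial.coeff_coe]
  have hdeg : (q ^ g).natDegree ≤ 2 * g :=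
    (Polynomial.natDegree_pow_le_of_le g hq).trans_eq (mul_comm g 2)
  rw [Polynomial.sum_coeff_mul_pow_sub_eq_eval_reflect hdeg, Polynomial.reflect_pow hq,
    show 2 = 1 + 1 from rfl,
    Polynomial.reflect_mul _ _ (by compute_degree) (by compute_degree),
    Polynomial.reflect_one_add_C_mul_X, Polynomial.reflect_one_add_C_mul_X]
  simp [mul_pow]

end PowerSeries

open PowerSeries

theorem coeff_two_g_sub_two_eq_residue_sum_general
    (K : Type*) [Field K] (u v : K) (g : ℕ) (hg : 1 ≤ g)
    (a b c : K)
    (hab : a ≠ b) (hac : a ≠ c) (hbc : b ≠ c) :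
    PowerSeries.coeff (R := K) (2 * g - 2)
      ((1 + PowerSeries.C (R := K) u * PowerSeries.X) ^ g *
        (1 + PowerSeries.C (R := K) v * PowerSeries.X) ^ g *
        (1 - PowerSeries.C (R := K) a * PowerSeries.X)⁻¹ *
        (1 - PowerSeries.C (R := K) b * PowerSeries.X)⁻¹ *
        (1 - PowerSeries.C (R := K) c * PowerSeries.X)⁻¹) =
      (a + u) ^ g * (a + v) ^ g / ((a - b) * (a - c)) +
      (b + u) ^ g * (b + v) ^ g / ((b - a) * (b - c)) +
      (c + u) ^ g * (c + v) ^ g / ((c - a) * (c - b)) := by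
  have shift (F : K⟦X⟧) : coeff (2 * g - 2) F = coeff (2 * g) (X ^ 2 * F) := by
    rw [coeff_X_pow_mul', if_pos (by omega)]
  have reassoc (P Ia Ib Ic : K⟦X⟧) :
      X ^ 2 * (P * Ia * Ib * Ic) = P * (X ^ 2 * (Ia * Ib * Ic)) := by
    ring
  rw [shift, reassoc, X_sq_mul_inv_one_sub_C_mul_X_mul_mul hab hac hbc]
  simp only [mul_add, map_add, mul_left_comm _ (C _), coeff_C_mul,
    coeff_two_mul_mul_inv_one_sub_C_mul_X, div_eq_inv_mul]

/-- Closed-form evaluation of the coefficient of `x^(2g-2)` in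
`(1+ux)^g (1+vx)^g (1-ax)⁻¹ (1-bx)⁻¹ (1-cx)⁻¹ ∈ K⟦x⟧`
(the residue `F₁(a,b,c)` of the paper). -/
theorem coeff_two_g_sub_two_eq_residue_sum
    (K : Type*) [Field K] (u v : K) (g : ℕ) (hg : 1 ≤ g)
    (a b c : K) (ha : a ≠ 0) (hb : b ≠ 0) (hc : c ≠ 0)
    (hab : a ≠ b) (hac : a ≠ c) (hbc : b ≠ c) :
    PowerSeries.coeff (R := K) (2 * g - 2)
      ((1 + PowerSeries.C (R := K) u * PowerSeries.X) ^ g *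
        (1 + PowerSeries.C (R := K) v * PowerSeries.X) ^ g *
        (1 - PowerSeries.C (R := K) a * PowerSeries.X)⁻¹ *
        (1 - PowerSeries.C (R := K) b * PowerSeries.X)⁻¹ *
        (1 - PowerSeries.C (R := K) c * PowerSeries.X)⁻¹) =
      (a + u) ^ g * (a + v) ^ g / ((a - b) * (a - c)) +
      (b + u) ^ g * (b + v) ^ g / ((b - a) * (b - c)) +
      (c + u) ^ g * (c + v) ^ g / ((c - a) * (c - b)) :=
  coeff_two_g_sub_two_eq_residue_sum_general K u v g hg a b c hab hac hbc
end

section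
/- Let K = ℚ(u,v) be the field of rational functions in two variables u, v over ℚ and set q = uv. Let g ≥ 1 be an integer and set P = (1+u)^g(1+v)^g, Q = (1+u)^{2g}(1+v)^{2g}, R = (1−u²)^g(1−v²)^g, W = (1+u²v)^g(1+uv²)^g, elements of K. Then for all integers N₁, N₂, the following identity holds in the field K(x) of rational functions in a further variable x: P·[ ((q^{N₂}−q^{N₁})/(1−q))·q^{g−1}·(Q/(1−q))·( q^{N₁}/(1−q^{−1}x) − q^{N₂+2}x/(1−q²x) − 1 ) + ((q^{2N₂}−q^{2N₁})/(1−q))·( 2PW − Q(1+2q^{g+1}−q²) − R(1−q)² )/(2(1−q)(1−q²)) + ((q^{2N₂}−q^{N₂}−q^{2N₁}+q^{N₁})/(1−q))·(Q−P)·((1−q^{g−1})/(1−q)) + ((q^{2N₂−1}−q^{N₂−1}−q^{2N₁−1}+q^{N₁−1})/(1−q))·P·((1−q^{g})/(1−q)) + (1/2)·( ((q^{2N₁}−2q^{N₁}−q^{2N₂}+2q^{N₂})/(1−q)²)·(Q−P) + ((q^{2N₂}−q^{2N₁})/(1−q²))·(R−P) ) + P·( q^{N₂}+q^{N₂−1}−q^{2N₂−1}−q^{N₁}−q^{N₁−1}+q^{2N₁−1}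 )/((1−q)(1−q²)) ] = Q·[ (q^{2N₂}−q^{2N₁})·(W−q^{g}P)/((1−q)²(1−q²)) − ( q^{g−1}P/((1−q)²(1+q)) )·( q^{2N₁+1}(1+q^{−2}x)/(1−q^{−1}x) + q^{2N₂}(1+q³x)/(1−q²x) − (1+q) q^{N₁+N₂}(1−qx²)/((1−q^{−1}x)(1−q²x)) ) ]. -/
noncomputable section

/-- The field `K = ℚ(u,v)` of rational functions in two variables over `ℚ`. -/
abbrev Kuv : Type := FractionRing (MvPolynomial (Fin 2) ℚ)

/-- The field `K(x)` of rational functions in a further variable `x` over `K`. -/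
abbrev Kx : Type := RatFunc Kuv

/-- The rational function `u`, viewed in `K(x)`. -/
def uL : Kx := RatFunc.C (algebraMap (MvPolynomial (Fin 2) ℚ) Kuv (MvPolynomial.X 0))

/-- The rational function `v`, viewed in `K(x)`. -/
def vL : Kx := RatFunc.C (algebraMap (MvPolynomial (Fin 2) ℚ) Kuv (MvPolynomial.X 1))

/-- `q = uv`, viewed in `K(x)`. -/
def qL : Kx := uL * vL

/-- The variable `x` of `K(x)`. -/
def xL : Kx := RatFunc.X

/-- `P = (1+u)^g (1+v)^g`. -/
def PL (g : ℕ) : Kx := (1 + uL) ^ g * (1 + vL) ^ g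

/-- `Q = (1+u)^{2g} (1+v)^{2g}`. -/
def QL (g : ℕ) : Kx := (1 + uL) ^ (2 * g) * (1 + vL) ^ (2 * g)

/-- `R = (1-u²)^g (1-v²)^g`. -/
def RL (g : ℕ) : Kx := (1 - uL ^ 2) ^ g * (1 - vL ^ 2) ^ g

/-- `W = (1+u²v)^g (1+uv²)^g`. -/
def WL (g : ℕ) : Kx := (1 + uL ^ 2 * vL) ^ g * (1 + uL * vL ^ 2) ^ g

/-! Once `Q = P²`, both sides are rational expressions in `q`, `x`, `P`, `R`, `W` and the monomials
`q^{N₁}`, `q^{N₂}`, `q^g`, with denominators built from `2`, `q`, `1 ± q`, `1 - q⁻¹x` and `1 - q²x`.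
These are nonzero in `K(x)`: `q = uv` is a nonconstant polynomial in `u, v`, and `x` is transcendental
over `K`. Clearing them turns the claim into a polynomial identity. -/

namespace RatFunc

theorem one_sub_C_mul_X_ne_zero {K : Type*} [Field K] (c : K) :
    (1 : RatFunc K) - C c * X ≠ 0 := by
  have hpoly : (1 - Polynomial.C c * Polynomial.X : Polynomial K) ≠ 0 := fun h => by
    simpa using congrArg (Polynomial.coeff · 0) h
  simpa using algebraMap_ne_zero hpoly

end RatFunc

abbrev polyToKx : MvPolynomial (Fin 2) ℚ →+* Kx :=
  RatFunc.C.comp (algebraMap (MvPolynomial (Fin 2) ℚ) Kuv)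

theorem polyToKx_injective : Function.Injective polyToKx :=
  fun _ _ h => IsFractionRing.injective _ Kuv (RatFunc.C.injective h)

theorem qL_eq_polyToKx : qL = polyToKx (MvPolynomial.X 0 * MvPolynomial.X 1) := by
  simp [qL, uL, vL]

theorem qL_ne_zero : qL ≠ 0 := by
  rw [qL_eq_polyToKx, map_ne_zero_iff _ polyToKx_injective]
  exact mul_ne_zero (MvPolynomial.X_ne_zero _) (MvPolynomial.X_ne_zero _)

theorem one_sub_qL_ne_zero : 1 - qL ≠ 0 := by
  rw [qL_eq_polyToKx, ← map_one polyToKx, ← map_sub, map_ne_zero_iff _ polyToKx_injective]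
  exact fun h => by simpa using congrArg MvPolynomial.constantCoeff h

theorem one_add_qL_ne_zero : 1 + qL ≠ 0 := by
  rw [qL_eq_polyToKx, ← map_one polyToKx, ← map_add, map_ne_zero_iff _ polyToKx_injective]
  exact fun h => by simpa using congrArg MvPolynomial.constantCoeff h

theorem one_sub_qL_sq_ne_zero : 1 - qL ^ 2 ≠ 0 := by
  rw [show 1 - qL ^ 2 = (1 - qL) * (1 + qL) by ring]
  exact mul_ne_zero one_sub_qL_ne_zero one_add_qL_ne_zero

theorem one_sub_zpow_qL_mul_xL_ne_zero (n : ℤ) : 1 - qL ^ n * xL ≠ 0 := by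
  rw [qL_eq_polyToKx, RingHom.comp_apply, ← map_zpow₀]
  exact RatFunc.one_sub_C_mul_X_ne_zero _

theorem QL_eq_PL_sq (g : ℕ) : QL g = PL g ^ 2 := by
  simp only [QL, PL]; ring

theorem flip_difference_strata_identity_general (g : ℕ) (N₁ N₂ : ℤ) :
    PL g *
      ( ((qL ^ N₂ - qL ^ N₁) / (1 - qL)) * qL ^ ((g : ℤ) - 1) * (QL g / (1 - qL)) *
          ( qL ^ N₁ / (1 - qL⁻¹ * xL) - qL ^ (N₂ + 2) * xL / (1 - qL ^ 2 * xL) - 1 ) +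
        ((qL ^ (2 * N₂) - qL ^ (2 * N₁)) / (1 - qL)) *
          ( (2 * PL g * WL g - QL g * (1 + 2 * qL ^ (g + 1) - qL ^ 2) -
              RL g * (1 - qL) ^ 2) / (2 * (1 - qL) * (1 - qL ^ 2)) ) +
        ((qL ^ (2 * N₂) - qL ^ N₂ - qL ^ (2 * N₁) + qL ^ N₁) / (1 - qL)) *
          (QL g - PL g) * ((1 - qL ^ ((g : ℤ) - 1)) / (1 - qL)) +
        ((qL ^ (2 * N₂ - 1) - qL ^ (N₂ - 1) - qL ^ (2 * N₁ - 1) + qL ^ (N₁ - 1)) /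
            (1 - qL)) * PL g * ((1 - qL ^ g) / (1 - qL)) +
        (1 / 2) *
          ( ((qL ^ (2 * N₁) - 2 * qL ^ N₁ - qL ^ (2 * N₂) + 2 * qL ^ N₂) / (1 - qL) ^ 2) *
              (QL g - PL g) +
            ((qL ^ (2 * N₂) - qL ^ (2 * N₁)) / (1 - qL ^ 2)) * (RL g - PL g) ) +
        PL g *
          ( (qL ^ N₂ + qL ^ (N₂ - 1) - qL ^ (2 * N₂ - 1) - qL ^ N₁ - qL ^ (N₁ - 1) +
              qL ^ (2 * N₁ - 1)) / ((1 - qL) * (1 - qL ^ 2)) ) ) =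
    QL g *
      ( (qL ^ (2 * N₂) - qL ^ (2 * N₁)) *
          ((WL g - qL ^ g * PL g) / ((1 - qL) ^ 2 * (1 - qL ^ 2))) -
        (qL ^ ((g : ℤ) - 1) * PL g / ((1 - qL) ^ 2 * (1 + qL))) *
          ( qL ^ (2 * N₁ + 1) * (1 + qL ^ (-2 : ℤ) * xL) / (1 - qL⁻¹ * xL) +
            qL ^ (2 * N₂) * (1 + qL ^ 3 * xL) / (1 - qL ^ 2 * xL) -
            (1 + qL) * qL ^ (N₁ + N₂) * (1 - qL * xL ^ 2) /
              ((1 - qL⁻¹ * xL) * (1 - qL ^ 2 * xL)) ) ) := by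
  have hq := qL_ne_zero
  have h1 := one_sub_qL_ne_zero
  have h1' := one_add_qL_ne_zero
  have h2 := one_sub_qL_sq_ne_zero
  have hx1 : 1 - qL⁻¹ * xL ≠ 0 := by simpa using one_sub_zpow_qL_mul_xL_ne_zero (-1)
  have hx2 : 1 - qL ^ 2 * xL ≠ 0 := by simpa using one_sub_zpow_qL_mul_xL_ne_zero 2
  -- `field_simp` rewrites `1 - q⁻¹x` as `(q - x) / q`.
  have hx1' : qL - xL ≠ 0 := by
    contrapose! hx1; field_simp; linear_combination hx1
  rw [QL_eq_PL_sq]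
  simp only [zpow_mul', zpow_sub_one₀ hq, zpow_add₀ hq, zpow_natCast, zpow_ofNat]
  field_simp
  ring

/-- The rational-function identity of Proposition 6.3 of the paper, collecting the six
strata contributions of the flip loci at an even critical value into the closed form of
the flip difference `Cₙ` (here `N₁ = d₁-d₂-n`, `N₂ = g-1-d₁+3n/2`). -/
theorem flip_difference_strata_identity (g : ℕ) (hg : 1 ≤ g) (N₁ N₂ : ℤ) :
    PL g *
      ( ((qL ^ N₂ - qL ^ N₁) / (1 - qL)) * qL ^ ((g : ℤ) - 1) * (QL g / (1 - qL)) *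
          ( qL ^ N₁ / (1 - qL⁻¹ * xL) - qL ^ (N₂ + 2) * xL / (1 - qL ^ 2 * xL) - 1 ) +
        ((qL ^ (2 * N₂) - qL ^ (2 * N₁)) / (1 - qL)) *
          ( (2 * PL g * WL g - QL g * (1 + 2 * qL ^ (g + 1) - qL ^ 2) -
              RL g * (1 - qL) ^ 2) / (2 * (1 - qL) * (1 - qL ^ 2)) ) +
        ((qL ^ (2 * N₂) - qL ^ N₂ - qL ^ (2 * N₁) + qL ^ N₁) / (1 - qL)) *
          (QL g - PL g) * ((1 - qL ^ ((g : ℤ) - 1)) / (1 - qL)) +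
        ((qL ^ (2 * N₂ - 1) - qL ^ (N₂ - 1) - qL ^ (2 * N₁ - 1) + qL ^ (N₁ - 1)) /
            (1 - qL)) * PL g * ((1 - qL ^ g) / (1 - qL)) +
        (1 / 2) *
          ( ((qL ^ (2 * N₁) - 2 * qL ^ N₁ - qL ^ (2 * N₂) + 2 * qL ^ N₂) / (1 - qL) ^ 2) *
              (QL g - PL g) +
            ((qL ^ (2 * N₂) - qL ^ (2 * N₁)) / (1 - qL ^ 2)) * (RL g - PL g) ) +
        PL g *
          ( (qL ^ N₂ + qL ^ (N₂ - 1) - qL ^ (2 * N₂ - 1) - qL ^ N₁ - qL ^ (N₁ - 1) +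
              qL ^ (2 * N₁ - 1)) / ((1 - qL) * (1 - qL ^ 2)) ) ) =
    QL g *
      ( (qL ^ (2 * N₂) - qL ^ (2 * N₁)) *
          ((WL g - qL ^ g * PL g) / ((1 - qL) ^ 2 * (1 - qL ^ 2))) -
        (qL ^ ((g : ℤ) - 1) * PL g / ((1 - qL) ^ 2 * (1 + qL))) *
          ( qL ^ (2 * N₁ + 1) * (1 + qL ^ (-2 : ℤ) * xL) / (1 - qL⁻¹ * xL) +
            qL ^ (2 * N₂) * (1 + qL ^ 3 * xL) / (1 - qL ^ 2 * xL) -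
            (1 + qL) * qL ^ (N₁ + N₂) * (1 - qL * xL ^ 2) /
              ((1 - qL⁻¹ * xL) * (1 - qL ^ 2 * xL)) ) ) :=
  flip_difference_strata_identity_general g N₁ N₂

end
end

section
/- Let k be a field and V a k-vector space. Define a relation ∼ on V × (V ∖ {0}) by declaring (x, y) ∼ (x′, y′) if and only if there exist λ ∈ k and μ ∈ kˣ with x′ = μx + λy and y′ = μy. Then ∼ is an equivalence relation, and the assignment sending (x, y) to the pair (L, φ), where L = k·y is the line spanned by y and φ : L → V/L is the unique k-linear map with φ(y) = x + L, induces a bijection from the quotient set (V × (V ∖ {0}))/∼ onto the set of pairs (L, φ) with L a one-dimensional linear subspace of V and φ ∈ Hom_k(L, V/L). -/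
/-!
A pair `(x, y)` with `y ≠ 0` determines the line `k ∙ y` and the map `c • y ↦ c • x` modulo that
line. Conversely `(L, φ)` is recovered from any generator `y` of `L` together with a lift `x` of
`φ y`, and the only freedom is in these choices: rescaling the generator `y ↦ μ • y` rescales the
lift to `μ • x`, which may then be moved by any element `λ • y` of the line. So `∼` is exactly the
kernel of `(x, y) ↦ (L, φ)`, which makes it an equivalence relation and the induced map injective.
-/

section LineHom

open Submodule

lemma Submodule.span_singleton_linearMap_ext {R M N : Type*} [Semiring R] [AddCommMonoid M]
    [Module R M] [AddCommMonoid N] [Module R N] {y : M} {φ ψ : R ∙ y →ₗ[R] N}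
    (h : φ ⟨y, mem_span_singleton_self y⟩ = ψ ⟨y, mem_span_singleton_self y⟩) : φ = ψ := by
  ext ⟨z, hz⟩
  obtain ⟨c, rfl⟩ := mem_span_singleton.mp hz
  have hc : (⟨c • y, hz⟩ : R ∙ y) = c • ⟨y, mem_span_singleton_self y⟩ := rfl
  rw [hc, map_smul, map_smul, h]

variable {k : Type*} [Field k] {V : Type*} [AddCommGroup V] [Module k V]

variable (k) in
/-- The line `k ∙ y` together with the map `c • y ↦ c • x + k ∙ y`. -/
noncomputable def lineHom (x : V) (y : {y : V // y ≠ 0}) :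
    Σ L : Submodule k V, L →ₗ[k] V ⧸ L :=
  ⟨k ∙ (y : V), LinearMap.toSpanSingleton k _ (Submodule.Quotient.mk x) ∘ₗ
    (LinearEquiv.coord k V (y : V) y.2).toLinearMap⟩

lemma finrank_lineHom_fst (x : V) (y : {y : V // y ≠ 0}) :
    Module.finrank k (lineHom k x y).1 = 1 :=
  finrank_span_singleton y.2

lemma lineHom_snd_apply_smul (x : V) (y : {y : V // y ≠ 0}) (c : k)
    (h : c • (y : V) ∈ (lineHom k x y).1) :
    (lineHom k x y).2 ⟨c • (y : V), h⟩ = Submodule.Quotient.mk (c • x) := by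
  show LinearMap.toSpanSingleton k (V ⧸ k ∙ (y : V)) (Submodule.Quotient.mk x)
    ((LinearEquiv.toSpanNonzeroSingleton k V y y.2).symm
      (LinearEquiv.toSpanNonzeroSingleton k V y y.2 c)) = _
  rw [LinearEquiv.symm_apply_apply, LinearMap.toSpanSingleton_apply]
  rfl

lemma lineHom_snd_apply_self (x : V) (y : {y : V // y ≠ 0}) (h : (y : V) ∈ (lineHom k x y).1) :
    (lineHom k x y).2 ⟨y, h⟩ = Submodule.Quotient.mk x := by
  simpa using lineHom_snd_apply_smul x y (1 : k) (by simpa using h)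

lemma lineHom_eq_iff {x : V} {y : {y : V // y ≠ 0}} {p : Σ L : Submodule k V, L →ₗ[k] V ⧸ L} :
    lineHom k x y = p ↔
      p.1 = k ∙ (y : V) ∧ ∃ h : (y : V) ∈ p.1, p.2 ⟨y, h⟩ = Submodule.Quotient.mk x := by
  constructor
  · rintro rfl
    exact ⟨rfl, mem_span_singleton_self _, lineHom_snd_apply_self x y _⟩
  · obtain ⟨L, φ⟩ := p
    rintro ⟨rfl, _, hφ⟩
    refine congrArg (Sigma.mk _) (span_singleton_linearMap_ext ?_)
    exact (lineHom_snd_apply_self x y _).trans hφ.symm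

lemma lineHom_eq_lineHom_iff {x x' : V} {y y' : {y : V // y ≠ 0}} :
    lineHom k x y = lineHom k x' y' ↔
      ∃ (lam : k) (mu : kˣ), x' = (mu : k) • x + lam • (y : V) ∧ (y' : V) = (mu : k) • (y : V) := by
  obtain ⟨y', hy'⟩ := y'
  rw [eq_comm, lineHom_eq_iff]
  constructor
  · rintro ⟨-, hmem, hφ⟩
    obtain ⟨mu, rfl⟩ := mem_span_singleton.mp hmem
    have hmu : mu ≠ 0 := by rintro rfl; exact hy' (zero_smul k _)
    rw [lineHom_snd_apply_smul, eq_comm, Submodule.Quotient.eq] at hφ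
    obtain ⟨c, hc⟩ := mem_span_singleton.mp hφ
    refine ⟨c, Units.mk0 mu hmu, ?_, rfl⟩
    rw [Units.val_mk0, hc, add_sub_cancel]
  · rintro ⟨lam, mu, rfl, rfl⟩
    refine ⟨(span_singleton_smul_eq mu.isUnit _).symm,
      smul_mem (k ∙ (y : V)) _ (mem_span_singleton_self _),
      (lineHom_snd_apply_smul x y (mu : k) _).trans ((Submodule.Quotient.eq _).mpr ?_)⟩
    rw [sub_add_cancel_left, ← neg_smul]
    exact smul_mem _ _ (mem_span_singleton_self _)

lemma exists_lineHom_eq (p : Σ L : Submodule k V, L →ₗ[k] V ⧸ L)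
    (hp : Module.finrank k p.1 = 1) : ∃ x y, lineHom k x y = p := by
  obtain ⟨v, hv, hspan⟩ := finrank_eq_one_iff'.mp hp
  obtain ⟨x, hx⟩ := Submodule.Quotient.mk_surjective _ (p.2 v)
  refine ⟨x, ⟨v, fun h => hv (Subtype.ext h)⟩, lineHom_eq_iff.mpr ⟨?_, v.2, hx.symm⟩⟩
  refine le_antisymm (fun w hw => ?_) (span_le.mpr (Set.singleton_subset_iff.mpr v.2))
  obtain ⟨c, hc⟩ := hspan ⟨w, hw⟩
  exact mem_span_singleton.mpr ⟨c, congrArg Subtype.val hc⟩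

end LineHom

/-- Let `k` be a field and `V` a `k`-vector space.  The relation `∼` on
`V × (V \ {0})` given by `(x, y) ∼ (x', y') ↔ ∃ λ ∈ k, μ ∈ kˣ, x' = μx + λy ∧ y' = μy`
is an equivalence relation, and `(x, y) ↦ (L, φ)`, where `L = k·y` and
`φ : L → V/L` is the unique linear map with `φ(y) = x + L`, induces a bijection
from the quotient set onto the set of pairs `(L, φ)` with `L ⊆ V` a line and
`φ ∈ Hom_k(L, V/L)`. -/
theorem quotient_bij_line_with_hom
    (k : Type*) [Field k] (V : Type*) [AddCommGroup V] [Module k V]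
    (r : (V × {y : V // y ≠ 0}) → (V × {y : V // y ≠ 0}) → Prop)
    (hr : ∀ p p' : V × {y : V // y ≠ 0}, r p p' ↔
      ∃ (lam : k) (mu : kˣ),
        p'.1 = (mu : k) • p.1 + lam • (p.2 : V) ∧ (p'.2 : V) = (mu : k) • (p.2 : V)) :
    Equivalence r ∧
    ∃ F : Quot r →
        {Lφ : Σ L : Submodule k V, (L →ₗ[k] V ⧸ L) // Module.finrank k Lφ.1 = 1},
      Function.Bijective F ∧
      ∀ (x : V) (y : {y : V // y ≠ 0}),
        (F (Quot.mk r (x, y))).1.1 = Submodule.span k {(y : V)} ∧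
        ∀ hy : (y : V) ∈ (F (Quot.mk r (x, y))).1.1,
          (F (Quot.mk r (x, y))).1.2 ⟨(y : V), hy⟩ = Submodule.Quotient.mk x := by
  have hker : r = InvImage Eq fun p => lineHom k p.1 p.2 := by
    ext p q
    exact (hr p q).trans lineHom_eq_lineHom_iff.symm
  refine ⟨hker ▸ InvImage.equivalence _ _ eq_equivalence,
    Quot.lift (fun p => ⟨lineHom k p.1 p.2, finrank_lineHom_fst p.1 p.2⟩)
      (fun p q h => Subtype.ext (by rwa [hker] at h)), ⟨?_, ?_⟩,
    fun x y => ⟨rfl, lineHom_snd_apply_self x y⟩⟩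
  · rintro ⟨p⟩ ⟨q⟩ h
    exact Quot.sound (by rw [hker]; exact congrArg Subtype.val h)
  · rintro ⟨p, hp⟩
    obtain ⟨x, y, rfl⟩ := exists_lineHom_eq p hp
    exact ⟨Quot.mk r (x, y), rfl⟩
end
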